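/- arXiv:1208.3183 — 2 statements merged into one kernel-verified Lean document; each statement's English description precedes it below -/
import Mathlib

section
/- Fix m ∈ (0,1], E < 0, and let Γ be the regularized four-degree-of-freedom rhomboidal Hamiltonian, S = diag(−G,−G,G,G) with G = diag(1,−1), and J the standard 8×8 symplectic matrix. Let γ : ℝ → ℝ⁸ be a solution of z' = J∇Γ(z) whose image lies in the open set where Γ is smooth (i.e. where ρ₁²+ρ₂² > 4|𝐐| and (ρ₁,ρ₂) ≠ (0,0)), and suppose that for some s₀ > 0 and some ζ₄, ζ₁ ∈ ℝ, γ(0) = (0,0,0,ζ₄,√8,0,0,0) and γ(s₀) = (ζ₁,0,0,0,0,0,0,√(8m³)). Then γ is periodic with period T = 4s₀, and for all s ∈ ℝ, −Sγ(T/2 − s) = γ(s) and Sγ(T − s) = γ(s). -/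
open Matrix

noncomputable section

/-- The gradient of `f : (ι → ℝ) → ℝ` as the vector of partial derivatives. -/
def grad {ι : Type*} [Fintype ι] [DecidableEq ι] (f : (ι → ℝ) → ℝ) (z : ι → ℝ) : ι → ℝ :=
  fun i => fderiv ℝ f z (Pi.single i 1)

/-- The standard `2n × 2n` symplectic matrix `[[0, I], [-I, 0]]`. -/
def Jmat (n : ℕ) : Matrix (Fin n ⊕ Fin n) (Fin n ⊕ Fin n) ℝ :=
  Matrix.fromBlocks 0 1 (-1) 0

/-- `ρ₁ = Q₁² + Q₂²`, in coordinates `(Q₁,Q₂,Q₃,Q₄,P₁,P₂,P₃,P₄)` with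
`Qᵢ = z (Sum.inl (i-1))` and `Pᵢ = z (Sum.inr (i-1))`. -/
def rho1 (z : (Fin 4 ⊕ Fin 4) → ℝ) : ℝ := (z (Sum.inl 0)) ^ 2 + (z (Sum.inl 1)) ^ 2

/-- `ρ₂ = Q₃² + Q₄²`. -/
def rho2 (z : (Fin 4 ⊕ Fin 4) → ℝ) : ℝ := (z (Sum.inl 2)) ^ 2 + (z (Sum.inl 3)) ^ 2

/-- `𝐐 = Q₁²Q₃Q₄ − Q₂²Q₃Q₄ − Q₁Q₂Q₃² + Q₁Q₂Q₄²`. -/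
def QQ (z : (Fin 4 ⊕ Fin 4) → ℝ) : ℝ :=
  (z (Sum.inl 0)) ^ 2 * z (Sum.inl 2) * z (Sum.inl 3)
    - (z (Sum.inl 1)) ^ 2 * z (Sum.inl 2) * z (Sum.inl 3)
    - z (Sum.inl 0) * z (Sum.inl 1) * (z (Sum.inl 2)) ^ 2
    + z (Sum.inl 0) * z (Sum.inl 1) * (z (Sum.inl 3)) ^ 2

/-- The regularized four-degree-of-freedom rhomboidal Hamiltonian in extended
phase space, with mass parameter `m` and energy parameter `E`. -/
def Gamma4 (m E : ℝ) (z : (Fin 4 ⊕ Fin 4) → ℝ) : ℝ :=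
  (rho2 z / 16) * ((z (Sum.inr 0)) ^ 2 + (z (Sum.inr 1)) ^ 2)
    + (rho1 z / (16 * m)) * ((z (Sum.inr 2)) ^ 2 + (z (Sum.inr 3)) ^ 2)
    - rho2 z / 2 - m ^ 2 * rho1 z / 2
    - 2 * m * rho1 z * rho2 z *
        (1 / Real.sqrt ((rho1 z) ^ 2 + (rho2 z) ^ 2 - 4 * QQ z)
          + 1 / Real.sqrt ((rho1 z) ^ 2 + (rho2 z) ^ 2 + 4 * QQ z))
    - E * rho1 z * rho2 z

/-- The symmetry matrix `S = diag(−G, −G, G, G)` with `G = diag(1,−1)`. -/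
def S8 : Matrix (Fin 4 ⊕ Fin 4) (Fin 4 ⊕ Fin 4) ℝ :=
  Matrix.fromBlocks (Matrix.diagonal ![-1, 1, -1, 1]) 0 0 (Matrix.diagonal ![1, -1, 1, -1])

/-! The maps `z ↦ S z` and `z ↦ -S z` are reversing symmetries of the Hamiltonian vector field
`J∇Γ`: Γ is invariant under both, and both anticommute with `J`. So if a solution passes through a
fixed point of such a reversor `R` at time `t₀`, then `s ↦ R γ(2t₀ - s)` is a solution with the same
value at `t₀`, and by uniqueness (Γ is smooth away from the collision set, so `J∇Γ` is locally
Lipschitz along γ) it equals γ. The collision states `γ(0)` and `γ(s₀)` are fixed by `S` and `-S`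
respectively; composing the two reflections gives `γ(s + 2s₀) = -γ(s)`, hence the period `4s₀`. -/

open Filter Function Topology

section Reversible

variable {V : Type*} [NormedAddCommGroup V] [NormedSpace ℝ V]

theorem ODE_solution_unique_of_locally_lipschitz {F : V → V} {f g : ℝ → V}
    (hF : ∀ t, ∃ K, ∃ U ∈ 𝓝 (f t), LipschitzOnWith K F U)
    (hf : ∀ t, HasDerivAt f (F (f t)) t) (hg : ∀ t, HasDerivAt g (F (g t)) t)
    {t₀ : ℝ} (heq : f t₀ = g t₀) : f = g := by
  have hopen : IsOpen {t | f t = g t} := isOpen_iff_mem_nhds.2 fun t ht => by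
    obtain ⟨K, U, hfU, hFU⟩ := hF t
    have hgU : U ∈ 𝓝 (g t) := (show f t = g t from ht) ▸ hfU
    exact ODE_solution_unique_of_eventually (v := fun _ => F) (s := fun _ => U)
      (.of_forall fun _ => hFU) ((Eventually.of_forall hf).and ((hf t).continuousAt hfU))
      ((Eventually.of_forall hg).and ((hg t).continuousAt hgU)) ht
  have hclosed : IsClosed {t | f t = g t} :=
    isClosed_eq (continuous_iff_continuousAt.2 fun t => (hf t).continuousAt)
      (continuous_iff_continuousAt.2 fun t => (hg t).continuousAt)
  funext t
  exact (IsClopen.eq_univ ⟨hclosed, hopen⟩ ⟨t₀, heq⟩ ▸ Set.mem_univ t :)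

theorem hasDerivAt_reversing_apply_sub {F : V → V} {γ : ℝ → V} (L : V →L[ℝ] V)
    (hL : ∀ z, F (L z) = -L (F z)) (hγ : ∀ t, HasDerivAt γ (F (γ t)) t) (c t : ℝ) :
    HasDerivAt (fun s => L (γ (c - s))) (F (L (γ (c - t)))) t := by
  have h := L.hasFDerivAt.comp_hasDerivAt t
    ((hγ (c - t)).scomp t ((hasDerivAt_id t).const_sub c))
  rw [hL]
  simpa [Function.comp_def] using h

theorem apply_eq_reversing_apply_of_fixed {F : V → V} {γ : ℝ → V} (L : V →L[ℝ] V)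
    (hL : ∀ z, F (L z) = -L (F z)) (hF : ∀ t, ∃ K, ∃ U ∈ 𝓝 (γ t), LipschitzOnWith K F U)
    (hγ : ∀ t, HasDerivAt γ (F (γ t)) t) {t₀ : ℝ} (hfix : L (γ t₀) = γ t₀) (s : ℝ) :
    L (γ (2 * t₀ - s)) = γ s := by
  have h := ODE_solution_unique_of_locally_lipschitz hF hγ
    (hasDerivAt_reversing_apply_sub L hL hγ (2 * t₀)) (t₀ := t₀)
    (by simp only [show 2 * t₀ - t₀ = t₀ by ring, hfix])
  exact (congrFun h s).symm

end Reversible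

theorem Function.antiperiodic_of_reflections {α : Type*} [Neg α] {γ : ℝ → α} (A : α → α) {c : ℝ}
    (h₁ : ∀ s, A (γ (-s)) = γ s) (h₂ : ∀ s, -A (γ (c - s)) = γ s) : Antiperiodic γ c := by
  intro s
  rw [← h₂ (s + c), show c - (s + c) = -s by ring, h₁]

section Hamiltonian

variable {ι : Type*} [Fintype ι] [DecidableEq ι]

theorem grad_mul_of_invariant {d : ι → ℝ} (hd : d * d = 1) {f : (ι → ℝ) → ℝ}
    (hf : ∀ z, f (d * z) = f z) (z : ι → ℝ) : grad f (d * z) = d * grad f z := by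
  let L : (ι → ℝ) ≃L[ℝ] (ι → ℝ) :=
    .equivOfInverse (ContinuousLinearMap.mul ℝ _ d) (ContinuousLinearMap.mul ℝ _ d)
      (fun z => by simp [← mul_assoc, hd]) (fun z => by simp [← mul_assoc, hd])
  have hderiv : fderiv ℝ f z = (fderiv ℝ f (d * z)).comp (L : (ι → ℝ) →L[ℝ] (ι → ℝ)) := by
    have hfL : f ∘ L = f := funext hf
    have h := L.comp_right_fderiv (f := f) (x := z)
    rw [hfL] at h
    exact h
  funext i
  have hsingle : d * Pi.single i 1 = d i • Pi.single i (1 : ℝ) := by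
    ext j
    rcases eq_or_ne j i with rfl | hj <;> simp [*]
  have hdi : d i * d i = 1 := congrFun hd i
  calc grad f (d * z) i = d i * d i * grad f (d * z) i := by rw [hdi, one_mul]
    _ = d i * grad f z i := by
      simp [grad, hderiv, L, hsingle, mul_assoc]

theorem ContDiffAt.grad {f : (ι → ℝ) → ℝ} {z : ι → ℝ} {n : WithTop ℕ∞}
    (hf : ContDiffAt ℝ (n + 1) f z) : ContDiffAt ℝ n (grad f) z :=
  contDiffAt_pi.2 fun _ => (hf.fderiv_right le_rfl).clm_apply contDiffAt_const

end Hamiltonian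

section Symplectic

variable {n : ℕ}

theorem Jmat_mulVec (v : Fin n ⊕ Fin n → ℝ) :
    Jmat n *ᵥ v = Sum.elim (fun i => v (.inr i)) (fun i => -v (.inl i)) := by
  rw [← Sum.elim_comp_inl_inr v, Jmat, fromBlocks_mulVec]
  ext (i | i) <;> simp [neg_mulVec]

theorem Jmat_mulVec_mul {d : Fin n ⊕ Fin n → ℝ} (hd : ∀ i, d (.inr i) = -d (.inl i))
    (v : Fin n ⊕ Fin n → ℝ) : Jmat n *ᵥ (d * v) = -(d * Jmat n *ᵥ v) := by
  ext (i | i) <;> simp [Jmat_mulVec, hd]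

def hamiltonianVectorField (H : (Fin n ⊕ Fin n → ℝ) → ℝ) (z : Fin n ⊕ Fin n → ℝ) :
    Fin n ⊕ Fin n → ℝ :=
  Jmat n *ᵥ grad H z

theorem hamiltonianVectorField_mul {H : (Fin n ⊕ Fin n → ℝ) → ℝ} {d : Fin n ⊕ Fin n → ℝ}
    (hd : d * d = 1) (hdJ : ∀ i, d (.inr i) = -d (.inl i)) (hH : ∀ z, H (d * z) = H z)
    (z : Fin n ⊕ Fin n → ℝ) :
    hamiltonianVectorField H (d * z) = -(d * hamiltonianVectorField H z) := by
  rw [hamiltonianVectorField, grad_mul_of_invariant hd hH, Jmat_mulVec_mul hdJ,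
    hamiltonianVectorField]

theorem ContDiffAt.hamiltonianVectorField {H : (Fin n ⊕ Fin n → ℝ) → ℝ}
    {z : Fin n ⊕ Fin n → ℝ} {k : WithTop ℕ∞} (hH : ContDiffAt ℝ (k + 1) H z) :
    ContDiffAt ℝ k (hamiltonianVectorField H) z :=
  (Jmat n).mulVecLin.toContinuousLinearMap.contDiff.contDiffAt.comp z hH.grad

end Symplectic

section Rhomboidal

variable (m E : ℝ)

def S8sign : Fin 4 ⊕ Fin 4 → ℝ := Sum.elim ![-1, 1, -1, 1] ![1, -1, 1, -1]

theorem S8_mulVec (v : Fin 4 ⊕ Fin 4 → ℝ) : S8 *ᵥ v = S8sign * v := by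
  ext i
  rw [S8, S8sign, fromBlocks_diagonal, mulVec_diagonal]
  rfl

theorem S8sign_mul_self : S8sign * S8sign = 1 := by
  ext (i | i) <;> fin_cases i <;> norm_num [S8sign]

theorem S8sign_inr (i : Fin 4) : S8sign (.inr i) = -S8sign (.inl i) := by
  fin_cases i <;> norm_num [S8sign]

theorem Gamma4_S8sign_mul (z : Fin 4 ⊕ Fin 4 → ℝ) : Gamma4 m E (S8sign * z) = Gamma4 m E z := by
  have hsq (i) : (S8sign * z) i ^ 2 = z i ^ 2 := by
    rw [Pi.mul_apply, mul_pow, sq, ← Pi.mul_apply, S8sign_mul_self, Pi.one_apply, one_mul]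
  have hQ : QQ (S8sign * z) = -QQ z := by simp [QQ, S8sign]; ring
  simp only [Gamma4, rho1, rho2, hsq, hQ]
  ring_nf

theorem Gamma4_neg (z : Fin 4 ⊕ Fin 4 → ℝ) : Gamma4 m E (-z) = Gamma4 m E z := by
  simp [Gamma4, rho1, rho2, QQ]

theorem hamiltonianVectorField_Gamma4_mul {d : Fin 4 ⊕ Fin 4 → ℝ} (hd : d = S8sign ∨ d = -S8sign)
    (z : Fin 4 ⊕ Fin 4 → ℝ) :
    hamiltonianVectorField (Gamma4 m E) (d * z) = -(d * hamiltonianVectorField (Gamma4 m E) z) := by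
  rcases hd with rfl | rfl
  · exact hamiltonianVectorField_mul S8sign_mul_self S8sign_inr (Gamma4_S8sign_mul m E) z
  · refine hamiltonianVectorField_mul (by rw [neg_mul_neg, S8sign_mul_self])
      (fun i => by simp [S8sign_inr]) (fun z => ?_) z
    rw [neg_mul, Gamma4_neg, Gamma4_S8sign_mul]

theorem contDiffAt_Gamma4 {z : Fin 4 ⊕ Fin 4 → ℝ} (hz : 4 * |QQ z| < rho1 z ^ 2 + rho2 z ^ 2)
    {n : WithTop ℕ∞} : ContDiffAt ℝ n (Gamma4 m E) z := by
  have h₁ : 0 < rho1 z ^ 2 + rho2 z ^ 2 - 4 * QQ z := by linarith [le_abs_self (QQ z)]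
  have h₂ : 0 < rho1 z ^ 2 + rho2 z ^ 2 + 4 * QQ z := by linarith [neg_abs_le (QQ z)]
  have hne₁ := h₁.ne'
  have hne₂ := h₂.ne'
  have hsqrt₁ := (Real.sqrt_pos.2 h₁).ne'
  have hsqrt₂ := (Real.sqrt_pos.2 h₂).ne'
  unfold Gamma4 rho1 rho2 QQ at *
  fun_prop (disch := assumption)

end Rhomboidal

theorem rhomboidal_orbit_periodic_and_symmetric_general (m E : ℝ)
    (γ : ℝ → (Fin 4 ⊕ Fin 4) → ℝ)
    (hdom : ∀ s : ℝ, (rho1 (γ s)) ^ 2 + (rho2 (γ s)) ^ 2 > 4 * |QQ (γ s)| ∧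
      ¬(rho1 (γ s) = 0 ∧ rho2 (γ s) = 0))
    (hsol : ∀ s : ℝ, HasDerivAt γ ((Jmat 4).mulVec (grad (Gamma4 m E) (γ s))) s)
    (s₀ : ℝ) (ζ₄ ζ₁ : ℝ)
    (h0 : γ 0 = Sum.elim (![0, 0, 0, ζ₄] : Fin 4 → ℝ) ![Real.sqrt 8, 0, 0, 0])
    (h1 : γ s₀ = Sum.elim (![ζ₁, 0, 0, 0] : Fin 4 → ℝ) ![0, 0, 0, Real.sqrt (8 * m ^ 3)]) :
    Function.Periodic γ (4 * s₀) ∧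
    (∀ s : ℝ, -S8.mulVec (γ (4 * s₀ / 2 - s)) = γ s) ∧
    (∀ s : ℝ, S8.mulVec (γ (4 * s₀ - s)) = γ s) := by
  have hlip (t : ℝ) := ((contDiffAt_Gamma4 m E (hdom t).1).hamiltonianVectorField
    (k := 1)).exists_lipschitzOnWith
  have hreflect {d : Fin 4 ⊕ Fin 4 → ℝ} (hd : d = S8sign ∨ d = -S8sign) {t₀ : ℝ}
      (hfix : d * γ t₀ = γ t₀) (s : ℝ) : d * γ (2 * t₀ - s) = γ s :=
    apply_eq_reversing_apply_of_fixed (ContinuousLinearMap.mul ℝ _ d)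
      (hamiltonianVectorField_Gamma4_mul m E hd) hlip hsol hfix s
  have hS (s : ℝ) : S8sign * γ (-s) = γ s := by
    have hfix : S8sign * γ 0 = γ 0 := by
      rw [h0]; ext (i | i) <;> fin_cases i <;> simp [S8sign]
    simpa using hreflect (.inl rfl) hfix s
  have hnegS (s : ℝ) : -(S8sign * γ (2 * s₀ - s)) = γ s := by
    have hfix : -S8sign * γ s₀ = γ s₀ := by
      rw [h1]; ext (i | i) <;> fin_cases i <;> simp [S8sign]
    simpa using hreflect (.inr rfl) hfix s
  have hper : Function.Periodic γ (4 * s₀) := by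
    have h := (Function.antiperiodic_of_reflections _ hS hnegS).periodic_two_mul
    rwa [← mul_assoc, two_mul 2, two_add_two_eq_four] at h
  refine ⟨hper, fun s => ?_, fun s => ?_⟩
  · rw [S8_mulVec, show 4 * s₀ / 2 - s = 2 * s₀ - s by ring, hnegS]
  · rw [S8_mulVec, show 4 * s₀ - s = -s + 4 * s₀ by ring, hper, hS]

/-- A solution of the regularized 4DF rhomboidal system starting at a collision of
the mass-1 bodies at `s = 0` and reaching a collision of the mass-`m` bodies at
`s = s₀` extends to a `T = 4s₀`-periodic orbit with time-reversing symmetries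
`S` and `−S`: for all `s`, `−Sγ(T/2 − s) = γ(s)` and `Sγ(T − s) = γ(s)`. -/
theorem rhomboidal_orbit_periodic_and_symmetric (m E : ℝ)
    (hm : m ∈ Set.Ioc (0 : ℝ) 1) (hE : E < 0)
    (γ : ℝ → (Fin 4 ⊕ Fin 4) → ℝ)
    (hdom : ∀ s : ℝ, (rho1 (γ s)) ^ 2 + (rho2 (γ s)) ^ 2 > 4 * |QQ (γ s)| ∧
      ¬(rho1 (γ s) = 0 ∧ rho2 (γ s) = 0))
    (hsol : ∀ s : ℝ, HasDerivAt γ ((Jmat 4).mulVec (grad (Gamma4 m E) (γ s))) s)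
    (s₀ : ℝ) (hs₀ : 0 < s₀) (ζ₄ ζ₁ : ℝ)
    (h0 : γ 0 = Sum.elim (![0, 0, 0, ζ₄] : Fin 4 → ℝ) ![Real.sqrt 8, 0, 0, 0])
    (h1 : γ s₀ = Sum.elim (![ζ₁, 0, 0, 0] : Fin 4 → ℝ) ![0, 0, 0, Real.sqrt (8 * m ^ 3)]) :
    Function.Periodic γ (4 * s₀) ∧
    (∀ s : ℝ, -S8.mulVec (γ (4 * s₀ / 2 - s)) = γ s) ∧
    (∀ s : ℝ, S8.mulVec (γ (4 * s₀ - s)) = γ s) :=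
  rhomboidal_orbit_periodic_and_symmetric_general m E γ hdom hsol s₀ ζ₄ ζ₁ h0 h1
end
end

section
/- Under the hypotheses of Roberts' time-reversing symmetry lemma — γ a T-periodic solution of z' = J∇Γ(z) with Γ C², S orthogonal, Γ∘S = Γ, SJ = −JS, γ(−s + T/N) = Sγ(s) for all s, and X the fundamental matrix solution of ξ' = JD²Γ(γ(s))ξ with X(0) = I — one has X(T/N) = S B⁻¹ Sᵀ B, where B = X(T/2N) (assumed invertible). -/
/-!
Write `c = T/2N` and `A(s) = J D²Γ(γ s)`. Invariance of `Γ` under `S` together with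
`γ(2c - s) = S γ(s)` gives `Sᵀ A(2c - s) = -A(s) Sᵀ`, so `W(t) = Sᵀ X(2c - t) S` solves the same
linear equation as `X`. Since `D²Γ` is symmetric, `Aᵀ J + J A = 0`, hence `Xᵀ J W` is constant in
time. Comparing it at `t = c` and `t = 0`, and using `Bᵀ J B = J` (the same conservation law with
`W = X`) to write `B⁻¹ = -J Bᵀ J`, yields `X(2c) = S B⁻¹ Sᵀ B`.
-/

open Matrix

noncomputable section

/-- The Hessian `D²f` of `f : (ι → ℝ) → ℝ` as a matrix of second partial derivatives. -/
def hessM {ι : Type*} [Fintype ι] [DecidableEq ι] (f : (ι → ℝ) → ℝ) (z : ι → ℝ) :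
    Matrix ι ι ℝ :=
  Matrix.of fun i j => fderiv ℝ (fun w => fderiv ℝ f w (Pi.single j 1)) z (Pi.single i 1)

-- With the entrywise sup norm, `HasDerivAt` of a matrix-valued map is entrywise differentiability.
attribute [local instance] Matrix.normedAddCommGroup Matrix.normedSpace

open Filter Topology

section SecondDerivative

variable {E F : Type*} [NormedAddCommGroup E] [NormedSpace ℝ E] [NormedAddCommGroup F]
  [NormedSpace ℝ F] {f : F → ℝ}

theorem fderiv_fderiv_apply_eq {x : F} (hf : DifferentiableAt ℝ (fderiv ℝ f) x) (v w : F) :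
    fderiv ℝ (fun u => fderiv ℝ f u w) x v = fderiv ℝ (fderiv ℝ f) x v w := by
  rw [fderiv_clm_apply hf (differentiableAt_const w)]
  simp

theorem fderiv_fderiv_comp_clm_apply (L : E →L[ℝ] F) {z : E}
    (hf : ∀ᶠ u in 𝓝 (L z), DifferentiableAt ℝ f u)
    (hf' : DifferentiableAt ℝ (fderiv ℝ f) (L z)) (v w : E) :
    fderiv ℝ (fun x => fderiv ℝ (f ∘ L) x w) z v = fderiv ℝ (fderiv ℝ f) (L z) (L v) (L w) := by
  have hchain : (fun x => fderiv ℝ (f ∘ L) x w) =ᶠ[𝓝 z] (fun u => fderiv ℝ f u (L w)) ∘ L := by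
    filter_upwards [L.continuous.continuousAt.eventually hf] with x hx
    simp [fderiv_comp x hx L.differentiableAt, L.fderiv]
  have hdiff : DifferentiableAt ℝ (fun u => fderiv ℝ f u (L w)) (L z) :=
    hf'.clm_apply (differentiableAt_const _)
  rw [hchain.fderiv_eq, fderiv_comp z hdiff L.differentiableAt, L.fderiv,
    ContinuousLinearMap.comp_apply, fderiv_fderiv_apply_eq hf']

end SecondDerivative

section Hessian

variable {ι : Type*} [Fintype ι] [DecidableEq ι] {f : (ι → ℝ) → ℝ} {z : ι → ℝ}

theorem hessM_apply_eq_fderiv_fderiv (hf : DifferentiableAt ℝ (fderiv ℝ f) z) (i j : ι) :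
    hessM f z i j = fderiv ℝ (fderiv ℝ f) z (Pi.single i 1) (Pi.single j 1) :=
  fderiv_fderiv_apply_eq hf _ _

theorem fderiv_fderiv_apply_eq_dotProduct_hessM (hf : DifferentiableAt ℝ (fderiv ℝ f) z)
    (v w : ι → ℝ) : fderiv ℝ (fderiv ℝ f) z v w = v ⬝ᵥ (hessM f z *ᵥ w) := by
  conv_lhs => rw [pi_eq_sum_univ' v, pi_eq_sum_univ' w]
  simp only [map_sum, map_smul, _root_.sum_apply, _root_.smul_apply,
    smul_eq_mul, dotProduct, mulVec, Finset.mul_sum, hessM_apply_eq_fderiv_fderiv hf]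
  rw [Finset.sum_comm]
  exact Finset.sum_congr rfl fun _ _ => Finset.sum_congr rfl fun _ _ => by ring

theorem hessM_transpose (hf : ContDiffAt ℝ 2 f z) : (hessM f z)ᵀ = hessM f z := by
  have hf' : DifferentiableAt ℝ (fderiv ℝ f) z :=
    (hf.fderiv_right (m := 1) le_rfl).differentiableAt one_ne_zero
  ext i j
  rw [transpose_apply, hessM_apply_eq_fderiv_fderiv hf', hessM_apply_eq_fderiv_fderiv hf',
    (hf.isSymmSndFDerivAt (by simp)).eq]

theorem hessM_congr {g : (ι → ℝ) → ℝ} (h : f =ᶠ[𝓝 z] g) : hessM f z = hessM g z := by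
  ext i j
  have hj : (fun w => fderiv ℝ f w (Pi.single j 1)) =ᶠ[𝓝 z]
      fun w => fderiv ℝ g w (Pi.single j 1) :=
    h.fderiv.fun_comp fun φ : (ι → ℝ) →L[ℝ] ℝ => φ (Pi.single j 1)
  simp only [hessM, of_apply, hj.fderiv_eq]

theorem hessM_comp_mulVec (S : Matrix ι ι ℝ) (hf : ContDiffAt ℝ 2 f (S *ᵥ z)) :
    hessM (fun w => f (S *ᵥ w)) z = Sᵀ * hessM f (S *ᵥ z) * S := by
  set L : (ι → ℝ) →L[ℝ] (ι → ℝ) := LinearMap.toContinuousLinearMap S.mulVecLin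
  have hf₁ : ∀ᶠ u in 𝓝 (L z), DifferentiableAt ℝ f u :=
    (hf.eventually (by simp)).mono fun u hu => hu.differentiableAt two_ne_zero
  have hf₂ : DifferentiableAt ℝ (fderiv ℝ f) (L z) :=
    (hf.fderiv_right (m := 1) le_rfl).differentiableAt one_ne_zero
  ext i j
  rw [hessM, of_apply, show (fun w => f (S *ᵥ w)) = f ∘ L from rfl,
    fderiv_fderiv_comp_clm_apply L hf₁ hf₂, fderiv_fderiv_apply_eq_dotProduct_hessM hf₂]
  change (S *ᵥ Pi.single i 1) ⬝ᵥ hessM f (S *ᵥ z) *ᵥ (S *ᵥ Pi.single j 1) = _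
  rw [mulVec_single_one, mulVec_single_one, dotProduct_mulVec]
  simp only [mul_apply, dotProduct, vecMul, col_apply, transpose_apply, Finset.sum_mul]

theorem hessM_eq_of_comp_mulVec_eq {Ω : Set (ι → ℝ)} (hΩ : IsOpen Ω) (hf : ContDiffOn ℝ 2 f Ω)
    {S : Matrix ι ι ℝ} (hSΩ : ∀ z ∈ Ω, S *ᵥ z ∈ Ω) (hfS : ∀ z ∈ Ω, f (S *ᵥ z) = f z)
    (hz : z ∈ Ω) : hessM f z = Sᵀ * hessM f (S *ᵥ z) * S := by
  rw [← hessM_comp_mulVec S (hf.contDiffAt (hΩ.mem_nhds (hSΩ z hz)))]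
  refine hessM_congr ?_
  filter_upwards [hΩ.mem_nhds hz] with w hw
  exact (hfS w hw).symm

end Hessian

section MatrixCalculus

variable {ι : Type*} [Fintype ι] {X Y : ℝ → Matrix ι ι ℝ} {X' Y' : Matrix ι ι ℝ} {t : ℝ}

theorem Matrix.hasDerivAt_iff :
    HasDerivAt X X' t ↔ ∀ i j, HasDerivAt (fun s => X s i j) (X' i j) t :=
  hasDerivAt_pi.trans (forall_congr' fun _ => hasDerivAt_pi)

theorem HasDerivAt.matrix_mul (hX : HasDerivAt X X' t) (hY : HasDerivAt Y Y' t) :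
    HasDerivAt (fun s => X s * Y s) (X' * Y t + X t * Y') t := by
  rw [Matrix.hasDerivAt_iff] at *
  intro i j
  simp only [Matrix.add_apply, Matrix.mul_apply, ← Finset.sum_add_distrib]
  exact HasDerivAt.fun_sum fun k _ => ((hX i k).mul (hY k j))

theorem HasDerivAt.matrix_transpose (hX : HasDerivAt X X' t) :
    HasDerivAt (fun s => (X s)ᵀ) X'ᵀ t := by
  rw [Matrix.hasDerivAt_iff] at *
  exact fun i j => hX j i

theorem transpose_mul_mul_eq_of_hasDerivAt {A : ℝ → Matrix ι ι ℝ} {J : Matrix ι ι ℝ}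
    (hA : ∀ t, (A t)ᵀ * J + J * A t = 0)
    (hX : ∀ t, HasDerivAt X (A t * X t) t) (hY : ∀ t, HasDerivAt Y (A t * Y t) t) (s t : ℝ) :
    (X s)ᵀ * J * Y s = (X t)ᵀ * J * Y t := by
  have hderiv : ∀ t, HasDerivAt (fun s => (X s)ᵀ * J * Y s) 0 t := by
    intro t
    convert (((hX t).matrix_transpose.matrix_mul (hasDerivAt_const t J)).matrix_mul (hY t)) using 1
    rw [Matrix.transpose_mul]
    calc (0 : Matrix ι ι ℝ) = (X t)ᵀ * ((A t)ᵀ * J + J * A t) * Y t := by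
          rw [hA, mul_zero, zero_mul]
      _ = _ := by noncomm_ring
  exact is_const_of_deriv_eq_zero (fun t => (hderiv t).differentiableAt)
    (fun t => (hderiv t).deriv) s t

theorem hasDerivAt_mul_comp_const_sub_mul {A : ℝ → Matrix ι ι ℝ} {P Q : Matrix ι ι ℝ} {a : ℝ}
    (hX : ∀ t, HasDerivAt X (A t * X t) t) (hPA : ∀ t, P * A (a - t) = -(A t * P)) (t : ℝ) :
    HasDerivAt (fun s => P * X (a - s) * Q) (A t * (P * X (a - t) * Q)) t := by
  convert ((hasDerivAt_const t P).matrix_mul ((hX (a - t)).comp_const_sub a t)).matrix_mul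
    (hasDerivAt_const t Q) using 1
  rw [zero_mul, zero_add, mul_zero, add_zero, mul_neg, ← mul_assoc P, hPA]
  noncomm_ring

end MatrixCalculus

theorem Jmat_mul_Jmat (n : ℕ) : Jmat n * Jmat n = -1 := by
  rw [Jmat, fromBlocks_multiply, ← fromBlocks_one, fromBlocks_neg]
  simp

theorem Jmat_transpose (n : ℕ) : (Jmat n)ᵀ = -Jmat n := by
  rw [Jmat, fromBlocks_transpose, fromBlocks_neg]
  simp

theorem transpose_mul_Jmat_add_Jmat_mul_eq_zero {n : ℕ}
    {H : Matrix (Fin n ⊕ Fin n) (Fin n ⊕ Fin n) ℝ} (hH : Hᵀ = H) :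
    (Jmat n * H)ᵀ * Jmat n + Jmat n * (Jmat n * H) = 0 := by
  rw [transpose_mul, Jmat_transpose, hH, ← mul_assoc (Jmat n), Jmat_mul_Jmat]
  simp [mul_assoc, Jmat_mul_Jmat]

theorem eq_mul_inv_mul_of_transpose_mul_mul_eq {ι R : Type*} [Fintype ι] [DecidableEq ι]
    [CommRing R] {J K B S Y : Matrix ι ι R} (hK : K * J = 1) (hS : S * Sᵀ = 1) (hB : Bᵀ * J * B = J)
    (h : Bᵀ * J * (Sᵀ * B * S) = J * (Sᵀ * Y * S)) :
    Y = S * B⁻¹ * Sᵀ * B := by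
  have hBinv : B⁻¹ = K * Bᵀ * J :=
    inv_eq_left_inv (by rw [mul_assoc, mul_assoc, ← mul_assoc Bᵀ, hB, hK])
  calc Y = S * (K * (J * (Sᵀ * Y * S))) * Sᵀ := by
        simp only [← mul_assoc, hK, hS, one_mul]; rw [mul_assoc, hS, mul_one]
    _ = S * (K * (Bᵀ * J * (Sᵀ * B * S))) * Sᵀ := by rw [h]
    _ = S * B⁻¹ * Sᵀ * B := by
        rw [hBinv]; simp only [mul_assoc, hS, mul_one]

theorem transpose_mul_Jmat_mul_hessM_mulVec {n : ℕ} {Ω : Set ((Fin n ⊕ Fin n) → ℝ)}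
    (hΩ : IsOpen Ω) {f : ((Fin n ⊕ Fin n) → ℝ) → ℝ} (hf : ContDiffOn ℝ 2 f Ω)
    {S : Matrix (Fin n ⊕ Fin n) (Fin n ⊕ Fin n) ℝ} (hS : S * Sᵀ = 1)
    (hSJ : S * Jmat n = -(Jmat n * S)) (hSΩ : ∀ z ∈ Ω, S *ᵥ z ∈ Ω)
    (hfS : ∀ z ∈ Ω, f (S *ᵥ z) = f z) {z : (Fin n ⊕ Fin n) → ℝ} (hz : z ∈ Ω) :
    Sᵀ * (Jmat n * hessM f (S *ᵥ z)) = -(Jmat n * hessM f z * Sᵀ) := by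
  have hStJ : Sᵀ * Jmat n = -(Jmat n * Sᵀ) := by
    simpa [transpose_mul, Jmat_transpose] using (congrArg transpose hSJ).symm
  rw [hessM_eq_of_comp_mulVec_eq hΩ hf hSΩ hfS hz]
  simp only [← mul_assoc, hStJ, neg_mul]
  rw [mul_assoc _ S, hS, mul_one]

theorem roberts_factorization_general (n : ℕ)
    (Ω : Set ((Fin n ⊕ Fin n) → ℝ)) (hΩ : IsOpen Ω)
    (Γ : ((Fin n ⊕ Fin n) → ℝ) → ℝ) (hΓ : ContDiffOn ℝ 2 Γ Ω)
    (T : ℝ)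
    (γ : ℝ → (Fin n ⊕ Fin n) → ℝ) (hmem : ∀ s, γ s ∈ Ω)
    (S : Matrix (Fin n ⊕ Fin n) (Fin n ⊕ Fin n) ℝ)
    (hSorth : Sᵀ * S = 1)
    (N : ℕ)
    (hsymm : ∀ s : ℝ, γ (-s + T / (N : ℝ)) = S.mulVec (γ s))
    (hSΩ : S.mulVec '' Ω = Ω)
    (hSinv : ∀ z ∈ Ω, Γ (S.mulVec z) = Γ z)
    (hSJ : S * Jmat n = -(Jmat n * S))
    (X : ℝ → Matrix (Fin n ⊕ Fin n) (Fin n ⊕ Fin n) ℝ)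
    (hX0 : X 0 = 1)
    (hX : ∀ (s : ℝ) (i j : Fin n ⊕ Fin n),
      HasDerivAt (fun t => X t i j) ((Jmat n * hessM Γ (γ s) * X s) i j) s) :
    IsUnit (X (T / (2 * (N : ℝ)))) →
      X (T / (N : ℝ)) = S * (X (T / (2 * (N : ℝ))))⁻¹ * Sᵀ * X (T / (2 * (N : ℝ))) := by
  intro _
  set c := T / (2 * (N : ℝ))
  set J := Jmat n
  set A := fun s => J * hessM Γ (γ s)
  have hTN : T / (N : ℝ) = c + c := by ring
  have hSSt : S * Sᵀ = 1 := mul_eq_one_comm.mp hSorth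
  have hXA : ∀ s, HasDerivAt X (A s * X s) s := fun s => Matrix.hasDerivAt_iff.mpr (hX s)
  have hA : ∀ s, (A s)ᵀ * J + J * A s = 0 := fun s => transpose_mul_Jmat_add_Jmat_mul_eq_zero
    (hessM_transpose (hΓ.contDiffAt (hΩ.mem_nhds (hmem s))))
  have hrev : ∀ t, Sᵀ * A (c + c - t) = -(A t * Sᵀ) := fun t => by
    simp only [A]
    rw [show c + c - t = -t + T / N by rw [hTN]; ring, hsymm]
    exact transpose_mul_Jmat_mul_hessM_mulVec hΩ hΓ hSSt hSJ
      (fun z hz => hSΩ ▸ Set.mem_image_of_mem _ hz) hSinv (hmem t)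
  have hW := hasDerivAt_mul_comp_const_sub_mul (Q := S) hXA hrev
  have hcons := transpose_mul_mul_eq_of_hasDerivAt hA hXA hW c 0
  have hsympl := transpose_mul_mul_eq_of_hasDerivAt hA hXA hXA c 0
  simp only [hX0, sub_zero, add_sub_cancel_right, transpose_one, one_mul, mul_one] at hcons hsympl
  rw [hTN]
  exact eq_mul_inv_mul_of_transpose_mul_mul_eq (K := -J) (by simp [J, Jmat_mul_Jmat]) hSSt
    hsympl hcons

/-- Roberts' time-reversing symmetry lemma: if `γ` is a `T`-periodic solution of
`z' = J∇Γ(z)` with time-reversing symmetry `S` (orthogonal, `Γ∘S = Γ`,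
`SJ = −JS`, `γ(−s + T/N) = Sγ(s)`), and `X` is the fundamental matrix solution
of the linearization `ξ' = JD²Γ(γ(s))ξ`, `X(0) = I`, then
`X(T/N) = S B⁻¹ Sᵀ B` where `B = X(T/2N)` (assumed invertible). -/
theorem roberts_factorization (n : ℕ)
    (Ω : Set ((Fin n ⊕ Fin n) → ℝ)) (hΩ : IsOpen Ω)
    (Γ : ((Fin n ⊕ Fin n) → ℝ) → ℝ) (hΓ : ContDiffOn ℝ 2 Γ Ω)
    (T : ℝ) (hT : 0 < T)
    (γ : ℝ → (Fin n ⊕ Fin n) → ℝ) (hmem : ∀ s, γ s ∈ Ω)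
    (hsol : ∀ s : ℝ, HasDerivAt γ ((Jmat n).mulVec (grad Γ (γ s))) s)
    (hper : Function.Periodic γ T)
    (S : Matrix (Fin n ⊕ Fin n) (Fin n ⊕ Fin n) ℝ)
    (hSorth : Sᵀ * S = 1)
    (N : ℕ) (hN : 0 < N)
    (hsymm : ∀ s : ℝ, γ (-s + T / (N : ℝ)) = S.mulVec (γ s))
    (hSΩ : S.mulVec '' Ω = Ω)
    (hSinv : ∀ z ∈ Ω, Γ (S.mulVec z) = Γ z)
    (hSJ : S * Jmat n = -(Jmat n * S))
    (X : ℝ → Matrix (Fin n ⊕ Fin n) (Fin n ⊕ Fin n) ℝ)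
    (hX0 : X 0 = 1)
    (hX : ∀ (s : ℝ) (i j : Fin n ⊕ Fin n),
      HasDerivAt (fun t => X t i j) ((Jmat n * hessM Γ (γ s) * X s) i j) s) :
    IsUnit (X (T / (2 * (N : ℝ)))) →
      X (T / (N : ℝ)) = S * (X (T / (2 * (N : ℝ))))⁻¹ * Sᵀ * X (T / (2 * (N : ℝ))) :=
  roberts_factorization_general n Ω hΩ Γ hΓ T γ hmem S hSorth N hsymm hSΩ hSinv hSJ X hX0 hX
end
end
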